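/- Let α, β be real numbers with α ≠ 0, β ≠ 0 and |α| + |β| < 1, let L > 0, and let μ₁, μ₂ ∈ (0,1) satisfy μ₂ < min{ 1 − |β| − α² , ((|β| − 1)² − α²)/(1 − |β|) , (α² − β² + |β|)/|β| } and μ₁ < min{ (1 − |β| − μ₂ − α²)/(L α²) , ((|β| − 1)² − α² − μ₂(1 − |β|))/(L(α² − β² + |β|(1 − μ₂))) }. Then the 2×2 real symmetric matrix M(μ₁,μ₂) with entries M₀₀ = (1 + Lμ₁)α² − 1 + |β| + μ₂, M₀₁ = M₁₀ = αβ(1 + Lμ₁), M₁₁ = β² − |β| + Lμ₁β² is negative definite: for every nonzero v ∈ ℝ², v ⬝ᵥ (M(μ₁,μ₂).mulVec v) < 0. -/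

import Mathlib

/-! A symmetric `2 × 2` matrix is negative definite as soon as its upper-left entry is negative
and its determinant is positive. For `M(μ₁, μ₂)` the first condition is the bound on `μ₁` with
denominator `L α²`. Writing `D = α² - β² + |β| (1 - μ₂)`, the determinant factors as
`|β| ((1 - |β|)² - α² - μ₂ (1 - |β|) - L μ₁ D)`; the bound on `μ₂` makes `D` positive, and the
second bound on `μ₁` then makes the determinant positive. -/

open Matrix

section QuadraticForm

variable {R : Type*} [CommRing R]

theorem dotProduct_mulVec_fin_two_symm (a b c : R) (v : Fin 2 → R) :
    v ⬝ᵥ !![a, b; b, c] *ᵥ v = a * v 0 ^ 2 + 2 * b * (v 0 * v 1) + c * v 1 ^ 2 := by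
  simp only [vec2_dotProduct, mulVec_fin_two, of_apply, cons_val', cons_val_zero, cons_val_one,
    empty_val', cons_val_fin_one]
  ring

theorem dotProduct_mulVec_fin_two_symm_neg [LinearOrder R] [IsStrictOrderedRing R] {a b c : R}
    (ha : a < 0) (hdet : 0 < a * c - b ^ 2) {v : Fin 2 → R} (hv : v ≠ 0) : v ⬝ᵥ !![a, b; b, c] *ᵥ v < 0 := by
  rw [dotProduct_mulVec_fin_two_symm]
  have hsq : a * (a * v 0 ^ 2 + 2 * b * (v 0 * v 1) + c * v 1 ^ 2)
      = (a * v 0 + b * v 1) ^ 2 + (a * c - b ^ 2) * v 1 ^ 2 := by ring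
  have hpos : 0 < a * (a * v 0 ^ 2 + 2 * b * (v 0 * v 1) + c * v 1 ^ 2) := by
    rw [hsq]
    by_cases hv1 : v 1 = 0
    · have hv0 : v 0 ≠ 0 := fun hv0 => hv (by ext i; fin_cases i <;> assumption)
      have hav0 : a * v 0 ≠ 0 := mul_ne_zero ha.ne hv0
      simp only [hv1, mul_zero, add_zero, ne_eq, OfNat.ofNat_ne_zero, not_false_eq_true,
        zero_pow]
      positivity
    · exact add_pos_of_nonneg_of_pos (sq_nonneg _) (mul_pos hdet (by positivity))
  exact neg_of_mul_pos_right hpos ha.le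

end QuadraticForm

theorem lyapunov_matrix_entry_zero_zero_neg {α β L μ₁ μ₂ : ℝ} (hα : α ≠ 0) (hL : 0 < L)
    (hμ₁ : μ₁ < (1 - |β| - μ₂ - α ^ 2) / (L * α ^ 2)) :
    (1 + L * μ₁) * α ^ 2 - 1 + |β| + μ₂ < 0 := by
  have := (lt_div_iff₀ (by positivity)).mp hμ₁
  linarith

theorem lyapunov_matrix_det_pos {α β L μ₁ μ₂ : ℝ} (hβ : β ≠ 0) (hL : 0 < L)
    (hμ₂ : μ₂ < (α ^ 2 - β ^ 2 + |β|) / |β|)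
    (hμ₁ : μ₁ < ((|β| - 1) ^ 2 - α ^ 2 - μ₂ * (1 - |β|)) /
      (L * (α ^ 2 - β ^ 2 + |β| * (1 - μ₂)))) :
    0 < ((1 + L * μ₁) * α ^ 2 - 1 + |β| + μ₂) * (β ^ 2 - |β| + L * μ₁ * β ^ 2)
      - (α * β * (1 + L * μ₁)) ^ 2 := by
  have hβ_pos : 0 < |β| := abs_pos.mpr hβ
  have hD : 0 < α ^ 2 - β ^ 2 + |β| * (1 - μ₂) := by
    have := (lt_div_iff₀ hβ_pos).mp hμ₂
    linarith
  have hμ₁' := (lt_div_iff₀ (by positivity)).mp hμ₁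
  have hfactor : ((1 + L * μ₁) * α ^ 2 - 1 + |β| + μ₂) * (β ^ 2 - |β| + L * μ₁ * β ^ 2)
      - (α * β * (1 + L * μ₁)) ^ 2
      = |β| * ((|β| - 1) ^ 2 - α ^ 2 - μ₂ * (1 - |β|)
          - μ₁ * (L * (α ^ 2 - β ^ 2 + |β| * (1 - μ₂)))) := by
    rcases abs_choice β with h | h <;> rw [h] <;> ring
  rw [hfactor]
  exact mul_pos hβ_pos (by linarith)

theorem lyapunov_matrix_neg_def_general (α β L μ₁ μ₂ : ℝ)
    (hα : α ≠ 0) (hβ : β ≠ 0) (hL : 0 < L)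
    (hμ₂ : μ₂ < min (min (1 - |β| - α ^ 2) (((|β| - 1) ^ 2 - α ^ 2) / (1 - |β|)))
      ((α ^ 2 - β ^ 2 + |β|) / |β|))
    (hμ₁ : μ₁ < min ((1 - |β| - μ₂ - α ^ 2) / (L * α ^ 2))
      (((|β| - 1) ^ 2 - α ^ 2 - μ₂ * (1 - |β|)) / (L * (α ^ 2 - β ^ 2 + |β| * (1 - μ₂))))) :
    ∀ v : Fin 2 → ℝ, v ≠ 0 →
      v ⬝ᵥ (!![(1 + L * μ₁) * α ^ 2 - 1 + |β| + μ₂, α * β * (1 + L * μ₁);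
               α * β * (1 + L * μ₁), β ^ 2 - |β| + L * μ₁ * β ^ 2]).mulVec v < 0 := by
  intro v hv
  exact dotProduct_mulVec_fin_two_symm_neg
    (lyapunov_matrix_entry_zero_zero_neg hα hL (lt_min_iff.mp hμ₁).1)
    (lyapunov_matrix_det_pos hβ hL (lt_min_iff.mp hμ₂).2 (lt_min_iff.mp hμ₁).2) hv

theorem lyapunov_matrix_neg_def (α β L μ₁ μ₂ : ℝ)
    (hα : α ≠ 0) (hβ : β ≠ 0) (hab : |α| + |β| < 1) (hL : 0 < L)
    (hμ₁mem : μ₁ ∈ Set.Ioo (0 : ℝ) 1) (hμ₂mem : μ₂ ∈ Set.Ioo (0 : ℝ) 1)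
    (hμ₂ : μ₂ < min (min (1 - |β| - α ^ 2) (((|β| - 1) ^ 2 - α ^ 2) / (1 - |β|)))
      ((α ^ 2 - β ^ 2 + |β|) / |β|))
    (hμ₁ : μ₁ < min ((1 - |β| - μ₂ - α ^ 2) / (L * α ^ 2))
      (((|β| - 1) ^ 2 - α ^ 2 - μ₂ * (1 - |β|)) / (L * (α ^ 2 - β ^ 2 + |β| * (1 - μ₂))))) :
    ∀ v : Fin 2 → ℝ, v ≠ 0 →
      v ⬝ᵥ (!![(1 + L * μ₁) * α ^ 2 - 1 + |β| + μ₂, α * β * (1 + L * μ₁);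
               α * β * (1 + L * μ₁), β ^ 2 - |β| + L * μ₁ * β ^ 2]).mulVec v < 0 :=
  lyapunov_matrix_neg_def_general α β L μ₁ μ₂ hα hβ hL hμ₂ hμ₁
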